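/- arXiv:2510.08563 — 2 statements merged into one kernel-verified Lean document; each statement's English description precedes it below -/
import Mathlib

section
/- Let {x_k} be the RK iterates for the system Ãx ≈ b̃ with arbitrary initial point x_0 ∈ ℝⁿ. Then for every x_* ∈ ℝⁿ and every k ≥ 0, the mean of the iterates satisfies ‖𝔼(x_k) − x_0ⁿ − x_*ʳ‖ ≤ (1 − 1/R̃)^k ‖x_0ʳ − x_*ʳ‖ + ‖Ã x_* − b̃‖/σ̃_min. -/
/-!
Averaging one Kaczmarz step over the row distribution makes the mean an affine iteration
`𝔼 x_{k+1} = P 𝔼 x_k + Aᵀ b / ‖A‖_F²` with `P = I - AᵀA / ‖A‖_F²`. Pick `z` in the row space with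
`AᵀA z = Aᵀ (A x⋆ - b)`; then `x₀ⁿ + x⋆ʳ - z` solves the normal equations, hence is a fixed point,
and `𝔼 x_k - x₀ⁿ - x⋆ʳ = Pᵏ (x₀ʳ - x⋆ʳ) - (I - Pᵏ) z`. In an eigenbasis of `AᵀA`, `P` has
eigenvalues in `[0, 1 - σ²/‖A‖_F²]` on the row space and `I - Pᵏ` is a contraction, while
`σ ‖z‖ ≤ ‖A z‖ ≤ ‖A x⋆ - b‖` because `A z` is the orthogonal projection of `A x⋆ - b` onto
`range A`.
-/

open Matrix

noncomputable section

namespace RK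

/-- The Euclidean inner product on `Fin n → ℝ`. -/
def dot {n : ℕ} (v w : Fin n → ℝ) : ℝ := ∑ i, v i * w i

/-- The squared Euclidean norm on `Fin n → ℝ`. -/
def normSq {n : ℕ} (v : Fin n → ℝ) : ℝ := ∑ i, v i ^ 2

/-- The Euclidean norm on `Fin n → ℝ`. -/
def euclNorm {n : ℕ} (v : Fin n → ℝ) : ℝ := Real.sqrt (normSq v)

/-- The squared Frobenius norm of a matrix. -/
def frobSq {m n : ℕ} (A : Matrix (Fin m) (Fin n) ℝ) : ℝ := ∑ i, ∑ j, A i j ^ 2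

/-- One step of the (randomized) Kaczmarz method for the system `A x ≈ b`, using row `i`:
`x ↦ x - ((aᵢᵀ x - bᵢ) / ‖aᵢ‖²) aᵢ`. -/
def rkStep {m n : ℕ} (A : Matrix (Fin m) (Fin n) ℝ) (b : Fin m → ℝ) (i : Fin m)
    (x : Fin n → ℝ) : Fin n → ℝ :=
  x - ((dot (A i) x - b i) / normSq (A i)) • A i

/-- `rkExp A b x0 k f` is the expectation `𝔼 f(x_k)` of `f` evaluated at the `k`-th iterate of the
randomized Kaczmarz algorithm applied to `A x ≈ b` started at `x0`, where at each step the row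
index `i` is drawn independently at random with probability `‖aᵢ‖² / ‖A‖_F²`. -/
def rkExp {m n : ℕ} (A : Matrix (Fin m) (Fin n) ℝ) (b : Fin m → ℝ) (x0 : Fin n → ℝ) :
    ℕ → ((Fin n → ℝ) → ℝ) → ℝ
  | 0, f => f x0
  | k + 1, f => rkExp A b x0 k fun x => ∑ i, normSq (A i) / frobSq A * f (rkStep A b i x)

/-- The four Penrose conditions: `B` is the Moore–Penrose pseudoinverse of `A`. -/
def IsMoorePenrose {m n : ℕ} (A : Matrix (Fin m) (Fin n) ℝ)
    (B : Matrix (Fin n) (Fin m) ℝ) : Prop :=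
  A * B * A = A ∧ B * A * B = B ∧ (A * B)ᵀ = A * B ∧ (B * A)ᵀ = B * A

/-- The row space `range(Aᵀ)` of a matrix `A`. -/
def rowSpace {m n : ℕ} (A : Matrix (Fin m) (Fin n) ℝ) : Set (Fin n → ℝ) :=
  {v | ∃ u : Fin m → ℝ, v = Aᵀ.mulVec u}

/-- The null space (kernel) of a matrix `A`. -/
def nullSpace {m n : ℕ} (A : Matrix (Fin m) (Fin n) ℝ) : Set (Fin n → ℝ) :=
  {v | A.mulVec v = 0}

/-- `σ` is the smallest nonzero singular value of `A`: `σ > 0`, `σ²` is an eigenvalue of `AᵀA`,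
and `σ²` is less than or equal to every nonzero eigenvalue of `AᵀA`. -/
def IsSmallestNonzeroSingularValue {m n : ℕ} (A : Matrix (Fin m) (Fin n) ℝ) (σ : ℝ) : Prop :=
  0 < σ ∧ (∃ v : Fin n → ℝ, v ≠ 0 ∧ (Aᵀ * A).mulVec v = σ ^ 2 • v) ∧
    ∀ μ : ℝ, μ ≠ 0 → (∃ v : Fin n → ℝ, v ≠ 0 ∧ (Aᵀ * A).mulVec v = μ • v) → σ ^ 2 ≤ μ

open WithLp
open scoped RealInnerProductSpace

section Eigenbasis

variable {ι E : Type*} [Fintype ι] [NormedAddCommGroup E] [InnerProductSpace ℝ E]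
  (u : OrthonormalBasis ι ℝ E) {T : E →ₗ[ℝ] E} {lam : ι → ℝ}

lemma inner_basis_apply_eq_mul_inner (hT : ∀ j, T (u j) = lam j • u j) (v : E) (j : ι) :
    ⟪u j, T v⟫ = lam j * ⟪u j, v⟫ := by
  conv_lhs => rw [← u.sum_repr' v]
  simp only [map_sum, map_smul, hT, smul_smul]
  rw [u.orthonormal.inner_right_fintype, mul_comm]

lemma norm_apply_le_of_abs_eigenvalues_le (hT : ∀ j, T (u j) = lam j • u j) {C : ℝ} {v : E}
    (hv : ∀ j, ⟪u j, v⟫ ≠ 0 → |lam j| ≤ C) : ‖T v‖ ≤ C * ‖v‖ := by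
  by_cases hv0 : ∀ j, ⟪u j, v⟫ = 0
  · have : v = 0 := by simpa [hv0] using (u.sum_repr' v).symm
    simp [this]
  push Not at hv0
  obtain ⟨j₀, hj₀⟩ := hv0
  have hC : 0 ≤ C := (abs_nonneg _).trans (hv j₀ hj₀)
  have hsq : ‖T v‖ ^ 2 ≤ (C * ‖v‖) ^ 2 := by
    rw [mul_pow, ← u.sum_sq_inner_right, ← u.sum_sq_inner_right, Finset.mul_sum]
    refine Finset.sum_le_sum fun j _ => ?_
    rw [inner_basis_apply_eq_mul_inner u hT, mul_pow]
    by_cases hj : ⟪u j, v⟫ = 0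
    · simp [hj]
    · have hlam := pow_le_pow_left₀ (abs_nonneg _) (hv j hj) 2
      rw [sq_abs] at hlam
      exact mul_le_mul_of_nonneg_right hlam (sq_nonneg _)
  exact (pow_le_pow_iff_left₀ (norm_nonneg _) (by positivity) two_ne_zero).mp hsq

lemma mul_norm_sq_le_inner_apply_of_le_eigenvalues (hT : ∀ j, T (u j) = lam j • u j) {C : ℝ}
    {v : E} (hv : ∀ j, ⟪u j, v⟫ ≠ 0 → C ≤ lam j) : C * ‖v‖ ^ 2 ≤ ⟪v, T v⟫ := by
  rw [← u.sum_sq_inner_right, ← u.sum_inner_mul_inner, Finset.mul_sum]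
  refine Finset.sum_le_sum fun j _ => ?_
  rw [inner_basis_apply_eq_mul_inner u hT, real_inner_comm (u j) v]
  by_cases hj : ⟪u j, v⟫ = 0
  · simp [hj]
  · nlinarith [hv j hj, sq_nonneg ⟪u j, v⟫]

end Eigenbasis

lemma sub_eq_pow_mulVec_of_affine_iterate {R ι : Type*} [CommRing R] [Fintype ι] [DecidableEq ι]
    {P : Matrix ι ι R} {c p : ι → R} {e : ℕ → ι → R} (he : ∀ k, e (k + 1) = P *ᵥ e k + c)
    (hp : P *ᵥ p + c = p) (k : ℕ) : e k - p = (P ^ k) *ᵥ (e 0 - p) := by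
  induction k with
  | zero => simp
  | succ k ih =>
    rw [he, pow_succ', ← mulVec_mulVec, ← ih, mulVec_sub]
    conv_lhs => rw [← hp]
    abel

lemma pow_mulVec_eq_smul {R ι : Type*} [CommRing R] [Fintype ι] [DecidableEq ι]
    {M : Matrix ι ι R} {v : ι → R} {a : R} (h : M *ᵥ v = a • v) (k : ℕ) :
    (M ^ k) *ᵥ v = a ^ k • v := by
  induction k with
  | zero => simp
  | succ k ih => rw [pow_succ, ← mulVec_mulVec, h, mulVec_smul, ih, smul_smul, pow_succ']

lemma range_mulVecLin_transpose_mul_self {m n : Type*} [Fintype m] [Fintype n]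
    (B : Matrix m n ℝ) : LinearMap.range (Bᵀ * B).mulVecLin = LinearMap.range Bᵀ.mulVecLin := by
  refine Submodule.eq_of_le_of_finrank_eq ?_
    ((rank_transpose_mul_self B).trans (rank_transpose B).symm)
  rw [mulVecLin_mul]
  exact LinearMap.range_comp_le_range _ _

lemma normSq_eq_norm_sq {n : ℕ} (v : Fin n → ℝ) : normSq v = ‖toLp 2 v‖ ^ 2 := by
  simp [EuclideanSpace.norm_sq_eq, normSq]

lemma euclNorm_eq_norm {n : ℕ} (v : Fin n → ℝ) : euclNorm v = ‖toLp 2 v‖ := by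
  rw [euclNorm, normSq_eq_norm_sq, Real.sqrt_sq (norm_nonneg _)]

lemma normSq_ne_zero {n : ℕ} {v : Fin n → ℝ} (hv : v ≠ 0) : normSq v ≠ 0 := by
  simpa [normSq_eq_norm_sq] using hv

lemma frobSq_eq_sum_normSq {m n : ℕ} (A : Matrix (Fin m) (Fin n) ℝ) :
    frobSq A = ∑ i, normSq (A i) := rfl

lemma frobSq_ne_zero {m n : ℕ} {A : Matrix (Fin m) (Fin n) ℝ} (hA : A ≠ 0) : frobSq A ≠ 0 := by
  obtain ⟨i, hi⟩ : ∃ i, A i ≠ 0 := by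
    by_contra! h
    exact hA (funext h)
  have hpos : 0 < normSq (A i) :=
    lt_of_le_of_ne (by rw [normSq_eq_norm_sq]; positivity) (normSq_ne_zero hi).symm
  rw [frobSq_eq_sum_normSq]
  exact (Finset.sum_pos' (fun j _ => by rw [normSq_eq_norm_sq]; positivity)
    ⟨i, Finset.mem_univ i, hpos⟩).ne'

section Expectation

variable {m n : ℕ} (A : Matrix (Fin m) (Fin n) ℝ) (b : Fin m → ℝ) (x0 : Fin n → ℝ)

lemma rkExp_add (k : ℕ) (f g : (Fin n → ℝ) → ℝ) :
    rkExp A b x0 k (fun x => f x + g x) = rkExp A b x0 k f + rkExp A b x0 k g := by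
  induction k generalizing f g with
  | zero => rfl
  | succ k ih =>
    simp only [rkExp, mul_add, Finset.sum_add_distrib]
    exact ih _ _

lemma rkExp_const_mul (k : ℕ) (c : ℝ) (f : (Fin n → ℝ) → ℝ) :
    rkExp A b x0 k (fun x => c * f x) = c * rkExp A b x0 k f := by
  induction k generalizing f with
  | zero => rfl
  | succ k ih =>
    simp only [rkExp, mul_left_comm _ c, ← Finset.mul_sum]
    exact ih _

lemma rkExp_sum {ι : Type*} (k : ℕ) (s : Finset ι) (f : ι → (Fin n → ℝ) → ℝ) :
    rkExp A b x0 k (fun x => ∑ l ∈ s, f l x) = ∑ l ∈ s, rkExp A b x0 k (f l) := by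
  classical
  induction s using Finset.induction with
  | empty => simpa using rkExp_const_mul A b x0 k 0 fun _ => 0
  | insert l s hl ih => simp only [Finset.sum_insert hl, rkExp_add, ih]

lemma rkExp_const (hF : frobSq A ≠ 0) (k : ℕ) (c : ℝ) : rkExp A b x0 k (fun _ => c) = c := by
  induction k with
  | zero => rfl
  | succ k ih =>
    simp only [rkExp, ← Finset.sum_mul, ← Finset.sum_div]
    rwa [← frobSq_eq_sum_normSq, div_self hF, one_mul]

def rkMean (k : ℕ) : Fin n → ℝ := fun j => rkExp A b x0 k fun x => x j

lemma rkExp_mulVec_add_apply (hF : frobSq A ≠ 0) (k : ℕ) (M : Matrix (Fin n) (Fin n) ℝ)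
    (c : Fin n → ℝ) (j : Fin n) :
    rkExp A b x0 k (fun x => (M *ᵥ x + c) j) = (M *ᵥ rkMean A b x0 k + c) j := by
  simp only [Pi.add_apply, mulVec, dotProduct]
  rw [rkExp_add, rkExp_sum, rkExp_const A b x0 hF]
  simp only [rkExp_const_mul, rkMean]

end Expectation

section Mean

variable {m n : ℕ} (A : Matrix (Fin m) (Fin n) ℝ) (b : Fin m → ℝ) (x0 : Fin n → ℝ)

def rkMeanMatrix : Matrix (Fin n) (Fin n) ℝ := 1 - (frobSq A)⁻¹ • (Aᵀ * A)

lemma sum_smul_rkStep (hF : frobSq A ≠ 0) (x : Fin n → ℝ) :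
    ∑ i, (normSq (A i) / frobSq A) • rkStep A b i x
      = rkMeanMatrix A *ᵥ x + (frobSq A)⁻¹ • (Aᵀ *ᵥ b) := by
  have hterm : ∀ i, (normSq (A i) / frobSq A) • rkStep A b i x
      = (normSq (A i) / frobSq A) • x - (frobSq A)⁻¹ • ((A *ᵥ x - b) i • A i) := by
    intro i
    by_cases hi : A i = 0
    -- `rkStep` divides by `normSq (A i) = 0` here, but the weight of the row vanishes
    · simp [hi, normSq]
    · have hN := normSq_ne_zero hi
      ext j
      simp only [rkStep, Pi.sub_apply, Pi.smul_apply, smul_eq_mul, mulVec, dotProduct, dot]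
      field_simp
  rw [Finset.sum_congr rfl fun i _ => hterm i, Finset.sum_sub_distrib, ← Finset.sum_smul,
    ← Finset.smul_sum, ← Finset.sum_div, ← frobSq_eq_sum_normSq, div_self hF, one_smul,
    ← vecMul_eq_sum, ← mulVec_transpose, rkMeanMatrix, sub_mulVec, one_mulVec, smul_mulVec,
    ← mulVec_mulVec, mulVec_sub, smul_sub]
  abel

lemma rkMean_succ (hF : frobSq A ≠ 0) (k : ℕ) :
    rkMean A b x0 (k + 1) = rkMeanMatrix A *ᵥ rkMean A b x0 k + (frobSq A)⁻¹ • (Aᵀ *ᵥ b) := by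
  funext j
  have hstep : ∀ x, ∑ i, normSq (A i) / frobSq A * rkStep A b i x j
      = (rkMeanMatrix A *ᵥ x + (frobSq A)⁻¹ • (Aᵀ *ᵥ b)) j := fun x => by
    rw [← sum_smul_rkStep A b hF, Finset.sum_apply]
    rfl
  simp only [rkMean, rkExp, hstep]
  exact rkExp_mulVec_add_apply A b x0 hF k _ _ j

lemma rkMean_sub_eq_pow_mulVec (hF : frobSq A ≠ 0) {p : Fin n → ℝ}
    (hp : (Aᵀ * A) *ᵥ p = Aᵀ *ᵥ b) (k : ℕ) :
    rkMean A b x0 k - p = (rkMeanMatrix A ^ k) *ᵥ (x0 - p) := by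
  refine sub_eq_pow_mulVec_of_affine_iterate (rkMean_succ A b x0 hF) ?_ k
  rw [rkMeanMatrix, sub_mulVec, one_mulVec, smul_mulVec, hp, sub_add_cancel]

end Mean

section RowSpace

variable {m n : ℕ} (A : Matrix (Fin m) (Fin n) ℝ)

lemma sub_mem_rowSpace {v w : Fin n → ℝ} (hv : v ∈ rowSpace A) (hw : w ∈ rowSpace A) :
    v - w ∈ rowSpace A := by
  obtain ⟨y, rfl⟩ := hv
  obtain ⟨y', rfl⟩ := hw
  exact ⟨y - y', (mulVec_sub _ _ _).symm⟩

lemma exists_mem_rowSpace_transpose_mul_self_mulVec_eq (r : Fin m → ℝ) :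
    ∃ z ∈ rowSpace A, (Aᵀ * A) *ᵥ z = Aᵀ *ᵥ r := by
  have hS : (Aᵀ * A)ᵀ = Aᵀ * A := by rw [transpose_mul, transpose_transpose]
  have hr : Aᵀ *ᵥ r ∈ LinearMap.range ((Aᵀ * A)ᵀ * (Aᵀ * A)).mulVecLin := by
    rw [range_mulVecLin_transpose_mul_self, hS, range_mulVecLin_transpose_mul_self]
    exact ⟨r, rfl⟩
  obtain ⟨y, hy⟩ := hr
  refine ⟨(Aᵀ * A) *ᵥ y, ⟨A *ᵥ y, (mulVec_mulVec _ _ _).symm⟩, ?_⟩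
  rw [mulVec_mulVec, ← hy, mulVecLin_apply, hS]

end RowSpace

lemma inner_toLp_transpose_mulVec {m n : ℕ} (A : Matrix (Fin m) (Fin n) ℝ) (v : Fin n → ℝ)
    (y : Fin m → ℝ) : ⟪toLp 2 v, toLp 2 (Aᵀ *ᵥ y)⟫ = ⟪toLp 2 (A *ᵥ v), toLp 2 y⟫ := by
  simp only [EuclideanSpace.inner_toLp_toLp, star_trivial, mulVec_transpose, dotProduct_mulVec]

lemma normSq_mulVec_le {m n : ℕ} (A : Matrix (Fin m) (Fin n) ℝ) (v : Fin n → ℝ) :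
    normSq (A *ᵥ v) ≤ frobSq A * normSq v := by
  rw [frobSq_eq_sum_normSq, Finset.sum_mul]
  exact Finset.sum_le_sum fun i _ => Finset.sum_mul_sq_le_sq_mul_sq Finset.univ (A i) v

lemma norm_mulVec_le_of_transpose_mul_self_mulVec_eq {m n : ℕ} (A : Matrix (Fin m) (Fin n) ℝ)
    {z : Fin n → ℝ} {r : Fin m → ℝ} (h : (Aᵀ * A) *ᵥ z = Aᵀ *ᵥ r) :
    ‖toLp 2 (A *ᵥ z)‖ ≤ ‖toLp 2 r‖ := by
  have hsq : ‖toLp 2 (A *ᵥ z)‖ ^ 2 ≤ ‖toLp 2 (A *ᵥ z)‖ * ‖toLp 2 r‖ := by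
    rw [← real_inner_self_eq_norm_sq, ← inner_toLp_transpose_mulVec, mulVec_mulVec, h,
      inner_toLp_transpose_mulVec]
    exact real_inner_le_norm _ _
  nlinarith [norm_nonneg (toLp 2 (A *ᵥ z)), norm_nonneg (toLp 2 r)]

lemma toEuclideanLin_apply_eq_smul {n : ℕ} {M : Matrix (Fin n) (Fin n) ℝ}
    {v : EuclideanSpace ℝ (Fin n)} {a : ℝ} (h : M *ᵥ v = a • v) : toEuclideanLin M v = a • v := by
  rw [toLpLin_apply, h, toLp_smul, toLp_ofLp]

section Spectral

variable {m n : ℕ} (A : Matrix (Fin m) (Fin n) ℝ)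
  {u : OrthonormalBasis (Fin n) ℝ (EuclideanSpace ℝ (Fin n))} {μ : Fin n → ℝ}
  (hu : ∀ j, (Aᵀ * A) *ᵥ u j = μ j • u j)
include hu

lemma eigenvalue_eq_norm_sq (j : Fin n) : μ j = ‖toLp 2 (A *ᵥ u j)‖ ^ 2 := by
  rw [← real_inner_self_eq_norm_sq, ← inner_toLp_transpose_mulVec, mulVec_mulVec, hu,
    toLp_smul, toLp_ofLp, real_inner_smul_right, real_inner_self_eq_norm_sq, u.norm_eq_one,
    one_pow, mul_one]

lemma eigenvalue_nonneg (j : Fin n) : 0 ≤ μ j := by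
  rw [eigenvalue_eq_norm_sq A hu]
  positivity

lemma eigenvalue_le_frobSq (j : Fin n) : μ j ≤ frobSq A := by
  have h := normSq_mulVec_le A (u j)
  rwa [normSq_eq_norm_sq, normSq_eq_norm_sq, toLp_ofLp, u.norm_eq_one, one_pow, mul_one,
    ← eigenvalue_eq_norm_sq A hu] at h

lemma inner_eq_zero_of_mem_rowSpace {v : Fin n → ℝ} (hv : v ∈ rowSpace A) {j : Fin n}
    (hj : μ j = 0) : ⟪u j, toLp 2 v⟫ = 0 := by
  obtain ⟨y, rfl⟩ := hv
  have hAu : toLp 2 (A *ᵥ u j) = 0 := by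
    rw [← norm_eq_zero, ← sq_eq_zero_iff, ← eigenvalue_eq_norm_sq A hu, hj]
  rw [← toLp_ofLp 2 (u j), inner_toLp_transpose_mulVec, hAu, inner_zero_left]

lemma sq_le_eigenvalue {σ : ℝ} (hσ : IsSmallestNonzeroSingularValue A σ) {j : Fin n}
    (hj : μ j ≠ 0) : σ ^ 2 ≤ μ j :=
  hσ.2.2 (μ j) hj ⟨u j, (ofLp_eq_zero 2).ne.2 (u.orthonormal.ne_zero j), hu j⟩

lemma mul_norm_le_norm_mulVec {σ : ℝ} (hσ : IsSmallestNonzeroSingularValue A σ)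
    {z : Fin n → ℝ} (hz : z ∈ rowSpace A) : σ * ‖toLp 2 z‖ ≤ ‖toLp 2 (A *ᵥ z)‖ := by
  have hsq : σ ^ 2 * ‖toLp 2 z‖ ^ 2 ≤ ⟪toLp 2 z, toLp 2 ((Aᵀ * A) *ᵥ z)⟫ :=
    mul_norm_sq_le_inner_apply_of_le_eigenvalues u (T := toEuclideanLin (Aᵀ * A))
      (fun j => toEuclideanLin_apply_eq_smul (hu j))
      fun j hj => sq_le_eigenvalue A hu hσ fun h => hj (inner_eq_zero_of_mem_rowSpace A hu hz h)
  rw [← mulVec_mulVec, inner_toLp_transpose_mulVec, real_inner_self_eq_norm_sq, ← mul_pow] at hsq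
  exact (pow_le_pow_iff_left₀ (mul_nonneg hσ.1.le (norm_nonneg _)) (norm_nonneg _)
    two_ne_zero).mp hsq

lemma rkMeanMatrix_mulVec_eq_smul (j : Fin n) :
    rkMeanMatrix A *ᵥ u j = (1 - μ j / frobSq A) • u j := by
  rw [rkMeanMatrix, sub_mulVec, one_mulVec, smul_mulVec, hu, smul_smul, sub_smul, one_smul,
    inv_mul_eq_div]

lemma norm_rkMeanMatrix_pow_mulVec_le {σ : ℝ} (hσ : IsSmallestNonzeroSingularValue A σ)
    {w : Fin n → ℝ} (hw : w ∈ rowSpace A) (k : ℕ) :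
    ‖toLp 2 (rkMeanMatrix A ^ k *ᵥ w)‖ ≤ (1 - σ ^ 2 / frobSq A) ^ k * ‖toLp 2 w‖ := by
  refine norm_apply_le_of_abs_eigenvalues_le u (T := toEuclideanLin (rkMeanMatrix A ^ k))
    (fun j => toEuclideanLin_apply_eq_smul
      (pow_mulVec_eq_smul (rkMeanMatrix_mulVec_eq_smul A hu j) k)) fun j hj => ?_
  have hσμ := sq_le_eigenvalue A hu hσ fun h => hj (inner_eq_zero_of_mem_rowSpace A hu hw h)
  have hμF := eigenvalue_le_frobSq A hu j
  have hF : 0 < frobSq A := (pow_pos hσ.1 2).trans_le (hσμ.trans hμF)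
  have hq : 0 ≤ 1 - μ j / frobSq A := sub_nonneg.2 ((div_le_one hF).2 hμF)
  rw [abs_pow, abs_of_nonneg hq]
  gcongr

lemma norm_one_sub_rkMeanMatrix_pow_mulVec_le (z : Fin n → ℝ) (k : ℕ) :
    ‖toLp 2 ((1 - rkMeanMatrix A ^ k) *ᵥ z)‖ ≤ ‖toLp 2 z‖ := by
  have hq : ∀ j, 0 ≤ μ j / frobSq A ∧ μ j / frobSq A ≤ 1 := fun j =>
    have hF : 0 ≤ frobSq A := by unfold frobSq; positivity
    ⟨div_nonneg (eigenvalue_nonneg A hu j) hF, div_le_one_of_le₀ (eigenvalue_le_frobSq A hu j) hF⟩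
  have hT : ∀ j, (1 - rkMeanMatrix A ^ k) *ᵥ u j = (1 - (1 - μ j / frobSq A) ^ k) • ofLp (u j) :=
    fun j => by
      rw [sub_mulVec, one_mulVec, pow_mulVec_eq_smul (rkMeanMatrix_mulVec_eq_smul A hu j),
        sub_smul, one_smul]
  have hbound := norm_apply_le_of_abs_eigenvalues_le u (C := 1) (v := toLp 2 z)
    (T := toEuclideanLin (1 - rkMeanMatrix A ^ k)) (fun j => toEuclideanLin_apply_eq_smul (hT j))
    fun j _ => by
      have := pow_le_one₀ (sub_nonneg.2 (hq j).2) (sub_le_self 1 (hq j).1) (n := k)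
      have := pow_nonneg (sub_nonneg.2 (hq j).2) k
      exact abs_le.2 ⟨by linarith, by linarith⟩
  rwa [one_mul] at hbound

end Spectral

theorem rk_mean_iterate_bound_general {m n : ℕ}
    (At : Matrix (Fin m) (Fin n) ℝ) (bt : Fin m → ℝ)
    (hAt : At ≠ 0)
    (σmin : ℝ) (hσ : IsSmallestNonzeroSingularValue At σmin)
    (x0 xstar x0r x0n xsr xsn : Fin n → ℝ)
    (hx0r : x0r ∈ rowSpace At) (hx0n : x0n ∈ nullSpace At) (hx0 : x0 = x0r + x0n)
    (hxsr : xsr ∈ rowSpace At) (hxsn : xsn ∈ nullSpace At) (hxs : xstar = xsr + xsn)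
    (k : ℕ) :
    euclNorm ((fun j => rkExp At bt x0 k (fun x => x j)) - x0n - xsr) ≤
      (1 - σmin ^ 2 / frobSq At) ^ k * euclNorm (x0r - xsr)
        + euclNorm (At.mulVec xstar - bt) / σmin := by
  have hS : (Atᵀ * At).IsHermitian := by simpa using isHermitian_conjTranspose_mul_self At
  have hu := hS.mulVec_eigenvectorBasis
  obtain ⟨z, hz, hSz⟩ := exists_mem_rowSpace_transpose_mul_self_mulVec_eq At (At *ᵥ xstar - bt)
  have hp : (Atᵀ * At) *ᵥ (x0n + xsr - z) = Atᵀ *ᵥ bt := by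
    have hAx0n : At *ᵥ x0n = 0 := hx0n
    have hAxsr : At *ᵥ xsr = At *ᵥ xstar := by rw [hxs, mulVec_add, hxsn, add_zero]
    rw [mulVec_sub, mulVec_add, hSz, ← mulVec_mulVec, ← mulVec_mulVec, hAx0n, hAxsr,
      mulVec_zero, zero_add, mulVec_sub, sub_sub_cancel]
  have hmean : rkMean At bt x0 k - x0n - xsr
      = rkMeanMatrix At ^ k *ᵥ (x0r - xsr) - (1 - rkMeanMatrix At ^ k) *ᵥ z := by
    have h := rkMean_sub_eq_pow_mulVec At bt x0 (frobSq_ne_zero hAt) hp k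
    rw [show x0 - (x0n + xsr - z) = (x0r - xsr) + z by rw [hx0]; abel, mulVec_add] at h
    rw [sub_mulVec, one_mulVec]
    linear_combination h
  have hz_le : ‖toLp 2 z‖ ≤ ‖toLp 2 (At *ᵥ xstar - bt)‖ / σmin := by
    rw [le_div_iff₀ hσ.1, mul_comm]
    exact (mul_norm_le_norm_mulVec At hu hσ hz).trans
      (norm_mulVec_le_of_transpose_mul_self_mulVec_eq At hSz)
  change euclNorm (rkMean At bt x0 k - x0n - xsr) ≤ _
  simp only [euclNorm_eq_norm, hmean, toLp_sub]
  exact (norm_sub_le _ _).trans (add_le_add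
    (norm_rkMeanMatrix_pow_mulVec_le At hu hσ (sub_mem_rowSpace At hx0r hxsr) k)
    ((norm_one_sub_rkMeanMatrix_pow_mulVec_le At hu z k).trans hz_le))

/-- **Corollary 3.4 (error of the mean).** For the RK iterates of `Ãx ≈ b̃` with arbitrary
initial point `x₀` and any `x⋆`:
`‖𝔼(x_k) − x₀ⁿ − x⋆ʳ‖ ≤ (1 − 1/R̃)^k ‖x₀ʳ − x⋆ʳ‖ + ‖Ã x⋆ − b̃‖ / σ̃_min`. -/
theorem rk_mean_iterate_bound {m n : ℕ}
    (At : Matrix (Fin m) (Fin n) ℝ) (bt : Fin m → ℝ)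
    (hAt : At ≠ 0) (hrows : ∀ i, At i ≠ 0)
    (σmin : ℝ) (hσ : IsSmallestNonzeroSingularValue At σmin)
    (x0 xstar x0r x0n xsr xsn : Fin n → ℝ)
    (hx0r : x0r ∈ rowSpace At) (hx0n : x0n ∈ nullSpace At) (hx0 : x0 = x0r + x0n)
    (hxsr : xsr ∈ rowSpace At) (hxsn : xsn ∈ nullSpace At) (hxs : xstar = xsr + xsn)
    (k : ℕ) :
    euclNorm ((fun j => rkExp At bt x0 k (fun x => x j)) - x0n - xsr) ≤
      (1 - σmin ^ 2 / frobSq At) ^ k * euclNorm (x0r - xsr)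
        + euclNorm (At.mulVec xstar - bt) / σmin :=
  rk_mean_iterate_bound_general At bt hAt σmin hσ x0 xstar x0r x0n xsr xsn hx0r hx0n hx0 hxsr hxsn
    hxs k

end RK
end
end

section
/- Fix Ã ∈ ℝ^{m×n} and b̃ ∈ ℝᵐ, and let x̃_LS = Ã†b̃. Let (Â, b̂) be any minimizer of ‖E x_LS − ε‖ over all pairs (A, b) with b ∈ range(A), where E = Ã − A, ε = b̃ − b, and x_LS = A†b. Then the least squares solution x̂_LS = Â†b̂ satisfies x̂_LS = x̃_LS + y for some y ∈ null(Ã). -/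
open Matrix

noncomputable section

namespace RK

lemma normSq_nonneg' {n : ℕ} (v : Fin n → ℝ) : 0 ≤ normSq v :=
  Finset.sum_nonneg fun _ _ => sq_nonneg _

lemma normSq_add' {n : ℕ} (u w : Fin n → ℝ) :
    normSq (u + w) = normSq u + 2 * dot u w + normSq w := by
  simp only [normSq, dot, Pi.add_apply, Finset.mul_sum, ← Finset.sum_add_distrib]
  exact Finset.sum_congr rfl fun i _ => by ring

lemma dot_eq_dotProduct {n : ℕ} (v w : Fin n → ℝ) : dot v w = v ⬝ᵥ w := rfl

lemma normSq_le_of_euclNorm_le {n : ℕ} {v w : Fin n → ℝ}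
    (h : euclNorm v ≤ euclNorm w) : normSq v ≤ normSq w :=
  (Real.sqrt_le_sqrt_iff (normSq_nonneg' w)).mp h

/-- **Theorem 4.1, minimizers.** If the consistent pair `(Â, b̂)` minimizes `‖E x_LS − ε‖`
over all consistent pairs `(A, b)` (with `E = Ã − A`, `ε = b̃ − b`, `x_LS = A†b`), then
`x̂_LS = Â†b̂` satisfies `x̂_LS = x̃_LS + y` for some `y ∈ null(Ã)`, where `x̃_LS = Ã†b̃`. -/
theorem minimizer_least_squares {m n : ℕ}
    (At : Matrix (Fin m) (Fin n) ℝ) (bt : Fin m → ℝ)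
    (Atp : Matrix (Fin n) (Fin m) ℝ) (hAtp : IsMoorePenrose At Atp)
    (Ah : Matrix (Fin m) (Fin n) ℝ) (bh : Fin m → ℝ)
    (Ahp : Matrix (Fin n) (Fin m) ℝ) (hAhp : IsMoorePenrose Ah Ahp)
    (hconsh : ∃ x, Ah.mulVec x = bh)
    (hmin : ∀ (A : Matrix (Fin m) (Fin n) ℝ) (b : Fin m → ℝ) (Ap : Matrix (Fin n) (Fin m) ℝ),
        IsMoorePenrose A Ap → (∃ x, A.mulVec x = b) →
        euclNorm ((At - Ah).mulVec (Ahp.mulVec bh) - (bt - bh)) ≤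
          euclNorm ((At - A).mulVec (Ap.mulVec b) - (bt - b))) :
    ∃ y ∈ nullSpace At, Ahp.mulVec bh = Atp.mulVec bt + y := by
  obtain ⟨hA1, hA2, hA3, hA4⟩ := hAtp
  set xh : Fin n → ℝ := Ahp.mulVec bh with hxh
  set xt : Fin n → ℝ := Atp.mulVec bt with hxt
  -- Step 1: Ah *ᵥ xh = bh
  have hstep1 : Ah.mulVec xh = bh := by
    obtain ⟨x, hx⟩ := hconsh
    rw [hxh, ← hx, Matrix.mulVec_mulVec, Matrix.mulVec_mulVec, hAhp.1]
  -- Step 2: apply minimality with (At, At *ᵥ xt)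
  have hmin' := hmin At (At.mulVec xt) Atp ⟨hA1, hA2, hA3, hA4⟩ ⟨xt, rfl⟩
  have hLHS : (At - Ah).mulVec xh - (bt - bh) = At.mulVec xh - bt := by
    rw [Matrix.sub_mulVec, hstep1]
    abel
  have hxtfix : Atp.mulVec (At.mulVec xt) = xt := by
    rw [hxt, Matrix.mulVec_mulVec, Matrix.mulVec_mulVec, hA2]
  have hRHS : (At - At).mulVec (Atp.mulVec (At.mulVec xt)) - (bt - At.mulVec xt)
      = At.mulVec xt - bt := by
    simp [Matrix.sub_mulVec]
  rw [hLHS, hRHS] at hmin'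
  have hsq := normSq_le_of_euclNorm_le hmin'
  -- Step 3: orthogonality / Pythagoras
  set u : Fin m → ℝ := At.mulVec xh - At.mulVec xt with hu
  set w : Fin m → ℝ := At.mulVec xt - bt with hw
  have huw : u + w = At.mulVec xh - bt := by rw [hu, hw]; abel
  -- u = P *ᵥ (At *ᵥ xh - bt) where P = At * Atp, and P *ᵥ w = 0
  have hPA : (At * Atp).mulVec (At.mulVec xh) = At.mulVec xh := by
    rw [Matrix.mulVec_mulVec, hA1]
  have hPxt : At.mulVec xt = (At * Atp).mulVec bt := by
    rw [hxt, Matrix.mulVec_mulVec]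
  have hPw : (At * Atp).mulVec w = 0 := by
    rw [hw, Matrix.mulVec_sub, hPxt, Matrix.mulVec_mulVec]
    rw [show At * Atp * (At * Atp) = At * Atp by rw [← Matrix.mul_assoc, hA1]]
    simp
  have huP : u = (At * Atp).mulVec (At.mulVec xh - bt) := by
    rw [Matrix.mulVec_sub, hPA, hu, hPxt]
  have hdot : dot u w = 0 := by
    rw [dot_eq_dotProduct, huP, dotProduct_comm, Matrix.dotProduct_mulVec,
      ← Matrix.mulVec_transpose, hA3, hPw, zero_dotProduct]
  have hpyth : normSq (At.mulVec xh - bt) = normSq u + normSq w := by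
    rw [← huw, normSq_add', hdot]; ring
  rw [hpyth] at hsq
  have hwsq : normSq w = normSq (At.mulVec xt - bt) := by rw [hw]
  have husq : normSq u ≤ 0 := by linarith [hwsq ▸ hsq]
  have huzero : u = 0 := by
    funext i
    have h0 : normSq u = 0 := le_antisymm husq (normSq_nonneg' u)
    have := (Finset.sum_eq_zero_iff_of_nonneg (fun j _ => sq_nonneg (u j))).mp h0
      i (Finset.mem_univ i)
    simpa [sq_eq_zero_iff] using this
  refine ⟨xh - xt, ?_, by abel⟩
  show At.mulVec (xh - xt) = 0
  rw [Matrix.mulVec_sub]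
  exact huzero

end RK
end
end
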